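/- arXiv:2002.03758 — 6 statements merged into one kernel-verified Lean document; each statement's English description precedes it below -/
import Mathlib

section
/- Let H : ℝ^N → ℝ be differentiable and G : ℝ^N → ℝ be differentiable and convex. Suppose the objective is dominated by the movement limiter, i.e. H(ρ̃|ρ) ≤ G(ρ̃|ρ) for all ρ, ρ̃ ∈ ℝ^N. Let (ρ_n)_{n≥0} be a sequence in ℝ^N satisfying the mirror-descent optimality condition ∇G(ρ_{n+1}) − ∇G(ρ_n) = −∇H(ρ_n) for all n ≥ 0. Then the descent property holds: H(ρ_{n+1}) ≤ H(ρ_n) − G(ρ_n|ρ_{n+1}) for all n ≥ 0. -/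
open RealInnerProductSpace

/-- Bregman divergence of a differentiable function `F : ℝ^N → ℝ`:
`F(φ₂|φ₁) = F(φ₂) − F(φ₁) − ⟨∇F(φ₁), φ₂ − φ₁⟩`. -/
noncomputable def bregman {N : ℕ} (F : EuclideanSpace ℝ (Fin N) → ℝ)
    (φ₂ φ₁ : EuclideanSpace ℝ (Fin N)) : ℝ :=
  F φ₂ - F φ₁ - ⟪gradient F φ₁, φ₂ - φ₁⟫

/-- descent property of Bregman gradient descent. -/
theorem descent_property {N : ℕ} (H G : EuclideanSpace ℝ (Fin N) → ℝ)
    (hHdiff : Differentiable ℝ H) (hGdiff : Differentiable ℝ G)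
    (hGconv : ConvexOn ℝ Set.univ G)
    (hdom : ∀ ρ ρ' : EuclideanSpace ℝ (Fin N), bregman H ρ' ρ ≤ bregman G ρ' ρ)
    (ρ : ℕ → EuclideanSpace ℝ (Fin N))
    (hiter : ∀ n : ℕ, gradient G (ρ (n + 1)) - gradient G (ρ n) = -gradient H (ρ n)) :
    ∀ n : ℕ, H (ρ (n + 1)) ≤ H (ρ n) - bregman G (ρ n) (ρ (n + 1)) := by
  intro n
  have h1 := hdom (ρ n) (ρ (n + 1))
  have h2 : gradient H (ρ n) = gradient G (ρ n) - gradient G (ρ (n + 1)) := by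
    have h := hiter n
    have : gradient H (ρ n) = -(gradient G (ρ (n + 1)) - gradient G (ρ n)) := by
      rw [h, neg_neg]
    rw [this, neg_sub]
  unfold bregman at h1 ⊢
  rw [h2] at h1
  simp only [inner_sub_left, inner_sub_right] at h1 ⊢
  linarith
end

section
/- Let H : ℝ^N → ℝ and G : ℝ^N → ℝ be differentiable with H convex and G convex, and suppose H(ρ̃|ρ) ≤ G(ρ̃|ρ) for all ρ, ρ̃ ∈ ℝ^N. Let (ρ_n)_{n≥0} satisfy ∇G(ρ_{n+1}) − ∇G(ρ_n) = −∇H(ρ_n) for all n ≥ 0. Then the one-step inequality H(ρ_{n+1}) ≤ H(ρ) + G(ρ|ρ_n) − G(ρ|ρ_{n+1}) holds for every ρ ∈ ℝ^N and every n ≥ 0. -/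
open RealInnerProductSpace

/-!
Convexity of `H` gives `H(ρₙ) + ⟨∇H(ρₙ), ρ − ρₙ⟩ ≤ H(ρ)`, and the domination `H(·|ρₙ) ≤ G(·|ρₙ)`
bounds `H(ρₙ₊₁)` by the linearization of `H` at `ρₙ` plus `G(ρₙ₊₁|ρₙ)`. By the three-point
identity `G(ρ|ρₙ) − G(ρ|ρₙ₊₁) = G(ρₙ₊₁|ρₙ) + ⟨∇G(ρₙ₊₁) − ∇G(ρₙ), ρ − ρₙ₊₁⟩` and the update
rule, `G(ρ|ρₙ) − G(ρ|ρₙ₊₁) = G(ρₙ₊₁|ρₙ) − ⟨∇H(ρₙ), ρ − ρₙ₊₁⟩`; adding the two bounds gives the claim.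
-/

theorem ConvexOn.add_fderiv_sub_le {E : Type*} [NormedAddCommGroup E] [NormedSpace ℝ E]
    {s : Set E} {f : E → ℝ} {f' : E →L[ℝ] ℝ} {x y : E} (hf : ConvexOn ℝ s f)
    (hx : x ∈ s) (hy : y ∈ s) (hf' : HasFDerivAt f f' x) :
    f x + f' (y - x) ≤ f y := by
  let g : ℝ →ᵃ[ℝ] E := AffineMap.lineMap x y
  have hg0 : g 0 = x := AffineMap.lineMap_apply_zero x y
  have hg1 : g 1 = y := AffineMap.lineMap_apply_one x y
  have hderiv : HasDerivAt (f ∘ g) (f' (y - x)) 0 :=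
    (hg0 ▸ hf').comp_hasDerivAt (0 : ℝ) AffineMap.hasDerivAt_lineMap
  have hslope := (hf.comp_affineMap g).le_slope_of_hasDerivAt
    (show g 0 ∈ s from hg0 ▸ hx) (show g 1 ∈ s from hg1 ▸ hy) zero_lt_one hderiv
  rw [slope_def_field, Function.comp_apply, Function.comp_apply, hg0, hg1] at hslope
  linarith

theorem ConvexOn.add_inner_gradient_sub_le {E : Type*} [NormedAddCommGroup E]
    [InnerProductSpace ℝ E] [CompleteSpace E]
    {s : Set E} {f : E → ℝ} {x y : E} (hf : ConvexOn ℝ s f)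
    (hx : x ∈ s) (hy : y ∈ s) (hfx : DifferentiableAt ℝ f x) :
    f x + ⟪gradient f x, y - x⟫ ≤ f y :=
  hf.add_fderiv_sub_le hx hy (hasGradientAt_iff_hasFDerivAt.mp hfx.hasGradientAt)

section Bregman

variable {N : ℕ} (F : EuclideanSpace ℝ (Fin N) → ℝ)

theorem bregman_nonneg {φ₂ φ₁ : EuclideanSpace ℝ (Fin N)} (hF : ConvexOn ℝ Set.univ F)
    (hφ₁ : DifferentiableAt ℝ F φ₁) : 0 ≤ bregman F φ₂ φ₁ := by
  have := hF.add_inner_gradient_sub_le (Set.mem_univ φ₁) (Set.mem_univ φ₂) hφ₁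
  unfold bregman
  linarith

theorem bregman_sub_bregman_same_base (φ ψ φ₁ : EuclideanSpace ℝ (Fin N)) :
    bregman F φ φ₁ - bregman F ψ φ₁ = F φ - F ψ - ⟪gradient F φ₁, φ - ψ⟫ := by
  simp only [bregman, inner_sub_right]
  ring

theorem bregman_three_point (ρ φ₁ φ₂ : EuclideanSpace ℝ (Fin N)) :
    bregman F ρ φ₁ - bregman F ρ φ₂ =
      bregman F φ₂ φ₁ + ⟪gradient F φ₂ - gradient F φ₁, ρ - φ₂⟫ := by
  simp only [bregman, inner_sub_left, inner_sub_right]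
  ring

end Bregman

theorem one_step_inequality_general {N : ℕ} (H G : EuclideanSpace ℝ (Fin N) → ℝ)
    (hHdiff : Differentiable ℝ H)
    (hHconv : ConvexOn ℝ Set.univ H)
    (hdom : ∀ ρ ρ' : EuclideanSpace ℝ (Fin N), bregman H ρ' ρ ≤ bregman G ρ' ρ)
    (ρseq : ℕ → EuclideanSpace ℝ (Fin N))
    (hiter : ∀ n : ℕ,
      gradient G (ρseq (n + 1)) - gradient G (ρseq n) = -gradient H (ρseq n)) :
    ∀ (ρ : EuclideanSpace ℝ (Fin N)) (n : ℕ),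
      H (ρseq (n + 1)) ≤ H ρ + bregman G ρ (ρseq n) - bregman G ρ (ρseq (n + 1)) := by
  intro ρ n
  have hconv := bregman_nonneg H (φ₂ := ρ) hHconv (hHdiff (ρseq n))
  have hstep := hdom (ρseq n) (ρseq (n + 1))
  have hthree := bregman_three_point G ρ (ρseq n) (ρseq (n + 1))
  rw [hiter n, inner_neg_left] at hthree
  have hlin := bregman_sub_bregman_same_base H (ρseq (n + 1)) ρ (ρseq n)
  rw [← neg_sub ρ, inner_neg_right] at hlin
  linarith

/-- one-step inequality for Bregman gradient descent with convex
objective `H` and convex movement limiter `G`. -/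
theorem one_step_inequality {N : ℕ} (H G : EuclideanSpace ℝ (Fin N) → ℝ)
    (hHdiff : Differentiable ℝ H) (hGdiff : Differentiable ℝ G)
    (hHconv : ConvexOn ℝ Set.univ H) (hGconv : ConvexOn ℝ Set.univ G)
    (hdom : ∀ ρ ρ' : EuclideanSpace ℝ (Fin N), bregman H ρ' ρ ≤ bregman G ρ' ρ)
    (ρseq : ℕ → EuclideanSpace ℝ (Fin N))
    (hiter : ∀ n : ℕ,
      gradient G (ρseq (n + 1)) - gradient G (ρseq n) = -gradient H (ρseq n)) :
    ∀ (ρ : EuclideanSpace ℝ (Fin N)) (n : ℕ),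
      H (ρseq (n + 1)) ≤ H ρ + bregman G ρ (ρseq n) - bregman G ρ (ρseq (n + 1)) :=
  one_step_inequality_general H G hHdiff hHconv hdom ρseq hiter
end

section
/- Let X and Y be finite sets, μ a probability measure on X with μ(x) > 0 for all x, and R : X × Y → [0,∞) with Σ_y R(x,y) > 0 for every x and Σ_x R(x,y) > 0 for every y. Let φ, φ̃ : Y → ℝ with associated couplings π = π(φ) and π̃ = π(φ̃). Then the Bregman divergence of F(φ) = Σ_x μ(x) φ⁺(x) satisfies F(φ|φ̃) = H(π̃|π), where F(φ|φ̃) = F(φ) − F(φ̃) − ⟨∇F(φ̃), φ − φ̃⟩ and H(π̃|π) = Σ_{x,y} π̃(x,y) ln( π̃(x,y) / π(x,y) ) is the relative entropy of the couplings (with the convention 0 ln 0 = 0; note π(x,y) = 0 iff R(x,y) = 0 iff π̃(x,y) = 0). -/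
open scoped BigOperators

/-- The `+`-transform: `φ⁺(x) = ln( Σ_y e^{φ(y)} R(x,y) / μ(x) )`. -/
noncomputable def plusT {X Y : Type*} [Fintype Y] (μ : X → ℝ) (R : X → Y → ℝ)
    (φ : Y → ℝ) (x : X) : ℝ :=
  Real.log ((∑ y, Real.exp (φ y) * R x y) / μ x)

/-- The coupling `π(φ)(x,y) = e^{φ(y) − φ⁺(x)} R(x,y)`. -/
noncomputable def coupling {X Y : Type*} [Fintype Y] (μ : X → ℝ) (R : X → Y → ℝ)
    (φ : Y → ℝ) (x : X) (y : Y) : ℝ :=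
  Real.exp (φ y - plusT μ R φ x) * R x y

/-- The functional `F(φ) = Σ_x μ(x) φ⁺(x)`. -/
noncomputable def Ffun {X Y : Type*} [Fintype X] [Fintype Y] (μ : X → ℝ)
    (R : X → Y → ℝ) (φ : Y → ℝ) : ℝ :=
  ∑ x, μ x * plusT μ R φ x

/-! `F` is a sum of log-partition functions, so its gradient at `φ̃` is the `Y`-marginal of
`π̃ = π(φ̃)`, and each row of `π̃` has mass `μ(x)`. Where `R(x,y) > 0` the kernel `R` cancels
in `π̃/π`, leaving `ln(π̃/π)(x,y) = (φ⁺ − φ̃⁺)(x) − (φ − φ̃)(y)`; integrating this against `π̃`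
produces exactly `F(φ) − F(φ̃) − ⟨∇F(φ̃), φ − φ̃⟩`. -/

open Real Finset

lemma sum_exp_mul_pos {Y : Type*} [Fintype Y] {r : Y → ℝ} (hr : ∀ y, 0 ≤ r y)
    (hr_sum : 0 < ∑ y, r y) (ψ : Y → ℝ) : 0 < ∑ y, exp (ψ y) * r y := by
  obtain ⟨y, -, hy⟩ : ∃ y ∈ univ, 0 < r y :=
    exists_lt_of_sum_lt (by simpa using hr_sum)
  exact sum_pos' (fun y _ => mul_nonneg (exp_pos _).le (hr y))
    ⟨y, mem_univ y, mul_pos (exp_pos _) hy⟩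

lemma hasFDerivAt_sum_exp_mul {Y : Type*} [Fintype Y] (r : Y → ℝ) (φ : Y → ℝ) :
    HasFDerivAt (fun ψ : Y → ℝ => ∑ y, exp (ψ y) * r y)
      (∑ y, (exp (φ y) * r y) • (ContinuousLinearMap.proj y : (Y → ℝ) →L[ℝ] ℝ)) φ := by
  refine HasFDerivAt.fun_sum fun y _ => ?_
  refine (((hasDerivAt_exp (φ y)).comp_hasFDerivAt φ (hasFDerivAt_apply (𝕜 := ℝ) y φ)).mul_const
    (r y)).congr_fderiv ?_
  rw [smul_smul, mul_comm]

section Coupling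

variable {X Y : Type*} [Fintype Y] {μ : X → ℝ} {R : X → Y → ℝ} {x : X}

lemma exp_plusT {ψ : Y → ℝ} (hμ : 0 < μ x) (hS : 0 < ∑ y, exp (ψ y) * R x y) :
    exp (plusT μ R ψ x) = (∑ y, exp (ψ y) * R x y) / μ x :=
  exp_log (div_pos hS hμ)

lemma coupling_eq_mul {ψ : Y → ℝ} (hμ : 0 < μ x) (hS : 0 < ∑ y, exp (ψ y) * R x y)
    (y : Y) : coupling μ R ψ x y = μ x / (∑ z, exp (ψ z) * R x z) * (exp (ψ y) * R x y) := by
  rw [coupling, exp_sub, exp_plusT hμ hS]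
  field_simp

lemma sum_coupling {ψ : Y → ℝ} (hμ : 0 < μ x) (hS : 0 < ∑ y, exp (ψ y) * R x y) :
    ∑ y, coupling μ R ψ x y = μ x := by
  simp only [coupling_eq_mul hμ hS, ← mul_sum]
  exact div_mul_cancel₀ _ hS.ne'

lemma hasFDerivAt_plusT {φ : Y → ℝ} (hμ : 0 < μ x) (hS : 0 < ∑ y, exp (φ y) * R x y) :
    HasFDerivAt (fun ψ => plusT μ R ψ x)
      (∑ y, (coupling μ R φ x y / μ x) • (ContinuousLinearMap.proj y : (Y → ℝ) →L[ℝ] ℝ)) φ := by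
  simp only [plusT, div_eq_mul_inv]
  refine (((hasFDerivAt_sum_exp_mul (R x) φ).mul_const (μ x)⁻¹).log
    (mul_ne_zero hS.ne' (inv_ne_zero hμ.ne'))).congr_fderiv ?_
  simp only [smul_sum, smul_smul, coupling_eq_mul hμ hS]
  refine sum_congr rfl fun y _ => ?_
  congr 1
  field_simp

lemma hasFDerivAt_Ffun [Fintype X] {φ : Y → ℝ} (hμ : ∀ x, 0 < μ x)
    (hS : ∀ x, 0 < ∑ y, exp (φ y) * R x y) :
    HasFDerivAt (Ffun μ R)
      (∑ x, ∑ y, coupling μ R φ x y • (ContinuousLinearMap.proj y : (Y → ℝ) →L[ℝ] ℝ)) φ := by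
  refine (HasFDerivAt.fun_sum fun x _ =>
    (hasFDerivAt_plusT (hμ x) (hS x)).const_mul (μ x)).congr_fderiv ?_
  refine sum_congr rfl fun x _ => ?_
  simp only [smul_sum, smul_smul, mul_div_cancel₀ _ (hμ x).ne']

lemma fderiv_Ffun_apply [Fintype X] {φ : Y → ℝ} (hμ : ∀ x, 0 < μ x)
    (hS : ∀ x, 0 < ∑ y, exp (φ y) * R x y) (h : Y → ℝ) :
    fderiv ℝ (Ffun μ R) φ h = ∑ x, ∑ y, coupling μ R φ x y * h y := by
  simp [(hasFDerivAt_Ffun hμ hS).fderiv]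

lemma coupling_mul_log_div (φ φt : Y → ℝ) (x : X) (y : Y) :
    coupling μ R φt x y * log (coupling μ R φt x y / coupling μ R φ x y) =
      coupling μ R φt x y * ((plusT μ R φ x - plusT μ R φt x) - (φ y - φt y)) := by
  rcases eq_or_ne (R x y) 0 with h0 | hne
  · simp [coupling, h0]
  · rw [coupling, coupling, mul_div_mul_right _ _ hne, ← exp_sub, log_exp]
    ring

end Coupling

theorem bregman_eq_relativeEntropy_couplings_general {X Y : Type*} [Fintype X] [Fintype Y]
    (μ : X → ℝ) (R : X → Y → ℝ)
    (hμpos : ∀ x, 0 < μ x)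
    (hR : ∀ x y, 0 ≤ R x y)
    (hrow : ∀ x, 0 < ∑ y, R x y)
    (φ φt : Y → ℝ) :
    Ffun μ R φ - Ffun μ R φt - fderiv ℝ (Ffun μ R) φt (φ - φt) =
      ∑ x, ∑ y, coupling μ R φt x y *
        Real.log (coupling μ R φt x y / coupling μ R φ x y) := by
  have hS : ∀ x, 0 < ∑ y, exp (φt y) * R x y := fun x => sum_exp_mul_pos (hR x) (hrow x) φt
  rw [fderiv_Ffun_apply hμpos hS]
  calc _ = ∑ x, ∑ y, coupling μ R φt x y * ((plusT μ R φ x - plusT μ R φt x) - (φ y - φt y)) := by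
        simp only [Ffun, Pi.sub_apply, mul_sub, sum_sub_distrib, ← sum_mul,
          sum_coupling (hμpos _) (hS _)]
    _ = _ := by simp only [coupling_mul_log_div]

/-- the Bregman divergence
`F(φ|φ̃) = F(φ) − F(φ̃) − ⟨∇F(φ̃), φ − φ̃⟩` equals the relative entropy
`H(π̃|π) = Σ_{x,y} π̃(x,y) ln( π̃(x,y)/π(x,y) )` of the associated couplings
`π̃ = π(φ̃)` and `π = π(φ)`. -/
theorem bregman_eq_relativeEntropy_couplings {X Y : Type*} [Fintype X] [Fintype Y]
    (μ : X → ℝ) (R : X → Y → ℝ)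
    (hμpos : ∀ x, 0 < μ x) (hμ : ∑ x, μ x = 1)
    (hR : ∀ x y, 0 ≤ R x y)
    (hrow : ∀ x, 0 < ∑ y, R x y) (hcol : ∀ y, 0 < ∑ x, R x y)
    (φ φt : Y → ℝ) :
    Ffun μ R φ - Ffun μ R φt - fderiv ℝ (Ffun μ R) φt (φ - φt) =
      ∑ x, ∑ y, coupling μ R φt x y *
        Real.log (coupling μ R φt x y / coupling μ R φ x y) :=
  bregman_eq_relativeEntropy_couplings_general μ R hμpos hR hrow φ φt
end

section
/- Let X and Y be finite sets, μ a probability measure on X with μ(x) > 0 for all x, and R : X × Y → [0,∞) with Σ_y R(x,y) > 0 for every x and Σ_x R(x,y) > 0 for every y. Let φ, φ̃ : Y → ℝ and let ρ = ∇F(φ) and ρ̃ = ∇F(φ̃) be the Y-marginals of the associated couplings π(φ) and π(φ̃). Then the relative entropy between the marginals is dominated by the Bregman divergence of F: H(ρ̃|ρ) = Σ_y ρ̃(y) ln( ρ̃(y)/ρ(y) ) ≤ F(φ|φ̃), where F(φ|φ̃) = F(φ) − F(φ̃) − ⟨∇F(φ̃), φ − φ̃⟩. (Equivalently, the Bregman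 divergence of H_ν(ρ) = H(ρ|ν) is dominated by the Bregman divergence of F*.) -/
open scoped BigOperators

/-- The `Y`-marginal `∇F(φ)(y) = Σ_x π(φ)(x,y)` of the coupling `π(φ)`. -/
noncomputable def gradF {X Y : Type*} [Fintype X] [Fintype Y] (μ : X → ℝ)
    (R : X → Y → ℝ) (φ : Y → ℝ) (y : Y) : ℝ :=
  ∑ x, coupling μ R φ x y

/-!
Both couplings `π(φ)` and `π(φ̃)` have `X`-marginal `μ`, and their log-ratio is
`φ⁺(x) − φ̃⁺(x) − (φ(y) − φ̃(y))`; integrating it against `π(φ̃)` shows that the Bregman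
divergence `F(φ|φ̃)` is exactly the relative entropy `H(π(φ̃)|π(φ))` of the couplings.
The relative entropy can only decrease under taking `Y`-marginals (log-sum inequality),
which gives `H(ρ̃|ρ) ≤ F(φ|φ̃)`.
-/

open Finset Real

/-- Since `log (p / 0) = 0`, this is `H(p|q)` only when `q i = 0 → p i = 0`. -/
noncomputable def relEntropy {ι : Type*} [Fintype ι] (p q : ι → ℝ) : ℝ :=
  ∑ i, p i * log (p i / q i)

theorem sum_mul_log_sum_div_sum_le_relEntropy {ι : Type*} [Fintype ι] {p q : ι → ℝ}
    (hp : ∀ i, 0 ≤ p i) (hq : ∀ i, 0 ≤ q i) (hpq : ∀ i, q i = 0 → p i = 0) :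
    (∑ i, p i) * log ((∑ i, p i) / ∑ i, q i) ≤ relEntropy p q := by
  set Q := ∑ i, q i
  obtain hQ | hQ : 0 = Q ∨ 0 < Q := (sum_nonneg fun i _ => hq i).eq_or_lt
  · have hq0 i : q i = 0 := (sum_eq_zero_iff_of_nonneg fun i _ => hq i).1 hQ.symm i (mem_univ i)
    simp [relEntropy, hpq _ (hq0 _)]
  -- Jensen for `t ↦ t log t` at the points `p i / q i` with weights `q i / Q`
  have hweighted i : q i / Q * (p i / q i) = p i / Q := by
    rcases (hq i).eq_or_lt with h | h
    · simp [← h, hpq i h.symm]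
    · field_simp
  have jensen := convexOn_mul_log.map_sum_le (t := univ) (w := fun i => q i / Q)
    (p := fun i => p i / q i) (fun i _ => div_nonneg (hq i) hQ.le)
    (by rw [← sum_div, div_self hQ.ne']) (fun i _ => div_nonneg (hp i) (hq i))
  simp only [smul_eq_mul, ← mul_assoc, hweighted, ← sum_div] at jensen
  calc (∑ i, p i) * log ((∑ i, p i) / Q) = Q * ((∑ i, p i) / Q * log ((∑ i, p i) / Q)) := by
        field_simp
    _ ≤ Q * ∑ i, p i / Q * log (p i / q i) := by gcongr
    _ = relEntropy p q := by
      rw [relEntropy, mul_sum]; exact sum_congr rfl fun i _ => by field_simp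

theorem relEntropy_marginal_le {α β : Type*} [Fintype α] [Fintype β] {p q : α → β → ℝ}
    (hp : ∀ a b, 0 ≤ p a b) (hq : ∀ a b, 0 ≤ q a b) (hpq : ∀ a b, q a b = 0 → p a b = 0) :
    relEntropy (fun b => ∑ a, p a b) (fun b => ∑ a, q a b) ≤
      relEntropy (Function.uncurry p) (Function.uncurry q) := by
  simp only [relEntropy, Fintype.sum_prod_type, Function.uncurry_apply_pair]
  rw [sum_comm]
  exact sum_le_sum fun b _ =>
    sum_mul_log_sum_div_sum_le_relEntropy (fun a => hp a b) (fun a => hq a b) (fun a => hpq a b)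

section Coupling

variable {X Y : Type*} [Fintype Y] {μ : X → ℝ} {R : X → Y → ℝ}

theorem coupling_nonneg (hR : ∀ x y, 0 ≤ R x y) (φ : Y → ℝ) (x : X) (y : Y) :
    0 ≤ coupling μ R φ x y :=
  mul_nonneg (exp_pos _).le (hR x y)

theorem coupling_eq_zero_iff {φ : Y → ℝ} {x : X} {y : Y} :
    coupling μ R φ x y = 0 ↔ R x y = 0 := by
  simp [coupling, exp_ne_zero]

theorem sum_coupling_eq {x : X} (hμ : 0 < μ x) (hR : ∀ y, 0 ≤ R x y) (hrow : 0 < ∑ y, R x y)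
    (φ : Y → ℝ) : ∑ y, coupling μ R φ x y = μ x := by
  obtain ⟨y₀, -, hy₀⟩ := (sum_pos_iff_of_nonneg fun y _ => hR y).1 hrow
  have hA : 0 < ∑ y, exp (φ y) * R x y :=
    (sum_pos_iff_of_nonneg fun y _ => mul_nonneg (exp_pos _).le (hR y)).2
      ⟨y₀, mem_univ _, mul_pos (exp_pos _) hy₀⟩
  simp only [coupling, plusT, exp_sub, exp_log (div_pos hA hμ), div_mul_eq_mul_div, ← sum_div]
  field_simp

theorem coupling_mul_log_coupling_div (φ φt : Y → ℝ) (x : X) (y : Y) :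
    coupling μ R φt x y * log (coupling μ R φt x y / coupling μ R φ x y) =
      coupling μ R φt x y * (plusT μ R φ x - plusT μ R φt x - (φ y - φt y)) := by
  rcases eq_or_ne (R x y) 0 with hxy | hxy
  · simp [coupling, hxy]
  · rw [coupling, coupling, mul_div_mul_right _ _ hxy, ← exp_sub, log_exp]
    ring

end Coupling

theorem bregman_eq_relEntropy_coupling {X Y : Type*} [Fintype X] [Fintype Y] {μ : X → ℝ}
    {R : X → Y → ℝ} (hμ : ∀ x, 0 < μ x) (hR : ∀ x y, 0 ≤ R x y)
    (hrow : ∀ x, 0 < ∑ y, R x y) (φ φt : Y → ℝ) :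
    Ffun μ R φ - Ffun μ R φt - ∑ y, gradF μ R φt y * (φ y - φt y) =
      relEntropy (Function.uncurry (coupling μ R φt)) (Function.uncurry (coupling μ R φ)) := by
  have hF : Ffun μ R φ - Ffun μ R φt =
      ∑ x, ∑ y, coupling μ R φt x y * (plusT μ R φ x - plusT μ R φt x) := by
    rw [Ffun, Ffun, ← sum_sub_distrib]
    refine sum_congr rfl fun x _ => ?_
    rw [← sum_mul, sum_coupling_eq (hμ x) (hR x) (hrow x), mul_sub]
  have hgrad : ∑ y, gradF μ R φt y * (φ y - φt y) =
      ∑ x, ∑ y, coupling μ R φt x y * (φ y - φt y) := by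
    simp only [gradF, sum_mul]
    exact sum_comm
  simp only [hF, hgrad, relEntropy, Fintype.sum_prod_type, Function.uncurry_apply_pair,
    coupling_mul_log_coupling_div, mul_sub _ (_ - _), ← sum_sub_distrib]

theorem relativeEntropy_marginals_le_bregman_general {X Y : Type*} [Fintype X] [Fintype Y]
    (μ : X → ℝ) (R : X → Y → ℝ)
    (hμpos : ∀ x, 0 < μ x)
    (hR : ∀ x y, 0 ≤ R x y)
    (hrow : ∀ x, 0 < ∑ y, R x y)
    (φ φt : Y → ℝ) :
    ∑ y, gradF μ R φt y * Real.log (gradF μ R φt y / gradF μ R φ y) ≤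
      Ffun μ R φ - Ffun μ R φt - ∑ y, gradF μ R φt y * (φ y - φt y) := by
  rw [bregman_eq_relEntropy_coupling hμpos hR hrow]
  exact relEntropy_marginal_le (coupling_nonneg hR φt) (coupling_nonneg hR φ)
    fun x y h => coupling_eq_zero_iff.2 (coupling_eq_zero_iff.1 h)

/-- with `ρ = ∇F(φ)` and `ρ̃ = ∇F(φ̃)` the `Y`-marginals of the
associated couplings, the relative entropy between the marginals is dominated
by the Bregman divergence of `F`:
`H(ρ̃|ρ) = Σ_y ρ̃(y) ln( ρ̃(y)/ρ(y) ) ≤ F(φ|φ̃) = F(φ) − F(φ̃) − ⟨∇F(φ̃), φ − φ̃⟩`. -/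
theorem relativeEntropy_marginals_le_bregman {X Y : Type*} [Fintype X] [Fintype Y]
    (μ : X → ℝ) (R : X → Y → ℝ)
    (hμpos : ∀ x, 0 < μ x) (hμ : ∑ x, μ x = 1)
    (hR : ∀ x y, 0 ≤ R x y)
    (hrow : ∀ x, 0 < ∑ y, R x y) (hcol : ∀ y, 0 < ∑ x, R x y)
    (φ φt : Y → ℝ) :
    ∑ y, gradF μ R φt y * Real.log (gradF μ R φt y / gradF μ R φ y) ≤
      Ffun μ R φ - Ffun μ R φt - ∑ y, gradF μ R φt y * (φ y - φt y) :=
  relativeEntropy_marginals_le_bregman_general μ R hμpos hR hrow φ φt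
end

section
/- Let X and Y be finite sets, μ a probability measure on X with μ(x) > 0 for all x, ν a probability measure on Y with ν(y) > 0 for all y, and R : X × Y → [0,∞) with Σ_y R(x,y) > 0 for every x, Σ_x R(x,y) > 0 for every y, and total mass Σ_{x,y} R(x,y) = 1. Let (φ_n)_{n≥0} be the Sinkhorn iterates φ_{n+1} = ((φ_n)⁺)⁻ starting from φ₀ ≡ 0, with Y-marginals ρ_n(y) = Σ_x e^{φ_n(y) − (φ_n)⁺(x)} R(x,y). Then for every coupling π ∈ Π(μ,ν) that is absolutely continuous with respect to R (π(x,y) = 0 whenever R(x,y) = 0) and every n ≥ 1, H(ρ_n|ν) ≤ H(π|R)/n. In particular H(ρ_n|ν) ≤ H*(μ,ν,R)/n where H*(μ,ν,R) = inf_{π∈Π(μ,ν)} H(π|R). -/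
open scoped BigOperators

/-- Log-sum inequality. -/
lemma my_logsum {ι : Type*} [Fintype ι] (a b : ι → ℝ)
    (ha : ∀ i, 0 ≤ a i) (hb : ∀ i, 0 ≤ b i) (hab : ∀ i, b i = 0 → a i = 0) :
    (∑ i, a i) * Real.log ((∑ i, a i) / (∑ i, b i)) ≤ ∑ i, a i * Real.log (a i / b i) := by
  set A := ∑ i, a i with hA
  set B := ∑ i, b i with hB
  rcases eq_or_lt_of_le (Finset.sum_nonneg fun i _ => ha i) with h0 | hApos
  · have hz : ∀ i, a i = 0 := fun i =>
      (Finset.sum_eq_zero_iff_of_nonneg (fun i _ => ha i)).mp h0.symm i (Finset.mem_univ i)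
    have hA0 : A = 0 := h0.symm
    simp [hA0, hz]
  · rw [← hA] at hApos
    have hBpos : 0 < B := by
      obtain ⟨i, hi⟩ : ∃ i, 0 < a i := by
        by_contra h; push_neg at h
        have : A ≤ 0 := Finset.sum_nonpos (fun i _ => h i)
        linarith
      have hbi : 0 < b i :=
        lt_of_le_of_ne (hb i) (fun h => by have := hab i h.symm; linarith)
      exact lt_of_lt_of_le hbi (Finset.single_le_sum (fun j _ => hb j) (Finset.mem_univ i))
    have key : ∀ i, a i * Real.log (A / B) + a i - b i * (A / B) ≤ a i * Real.log (a i / b i) := by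
      intro i
      rcases eq_or_lt_of_le (ha i) with h0 | hai
      · rw [← h0]
        have : 0 ≤ b i * (A / B) := mul_nonneg (hb i) (div_nonneg hApos.le hBpos.le)
        simp only [zero_mul, zero_add, zero_sub, neg_nonpos] at *
        linarith
      · have hbi : 0 < b i :=
          lt_of_le_of_ne (hb i) (fun h => by have := hab i h.symm; linarith)
        have h1 : Real.log (a i / b i) = Real.log (A / B) + Real.log ((a i * B) / (b i * A)) := by
          rw [← Real.log_mul (by positivity) (by positivity)]
          congr 1
          field_simp
        have h2 : 1 - (b i * A) / (a i * B) ≤ Real.log ((a i * B) / (b i * A)) := by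
          have hx := Real.log_le_sub_one_of_pos (x := (b i * A) / (a i * B)) (by positivity)
          have hlog : Real.log ((b i * A) / (a i * B)) = -Real.log ((a i * B) / (b i * A)) := by
            rw [← Real.log_inv]
            congr 1
            field_simp
          rw [hlog] at hx
          linarith
        have h3 : a i * ((b i * A) / (a i * B)) = b i * (A / B) := by
          field_simp
        have h4 : a i * (1 - (b i * A) / (a i * B)) ≤ a i * Real.log ((a i * B) / (b i * A)) :=
          mul_le_mul_of_nonneg_left h2 hai.le
        rw [mul_sub, h3, mul_one] at h4
        rw [h1, mul_add]
        linarith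
    have hsum : ∑ i, (a i * Real.log (A / B) + a i - b i * (A / B)) = A * Real.log (A / B) := by
      rw [Finset.sum_sub_distrib, Finset.sum_add_distrib, ← Finset.sum_mul, ← Finset.sum_mul,
        ← hA, ← hB, mul_div_cancel₀ _ (ne_of_gt hBpos)]
      ring
    calc A * Real.log (A / B) = ∑ i, (a i * Real.log (A / B) + a i - b i * (A / B)) := hsum.symm
      _ ≤ ∑ i, a i * Real.log (a i / b i) := Finset.sum_le_sum (fun i _ => key i)

/-- Gibbs inequality. -/
lemma my_gibbs {ι : Type*} [Fintype ι] (a b : ι → ℝ)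
    (ha : ∀ i, 0 ≤ a i) (hb : ∀ i, 0 ≤ b i) (hab : ∀ i, b i = 0 → a i = 0)
    (hsum : ∑ i, a i = ∑ i, b i) :
    0 ≤ ∑ i, a i * Real.log (a i / b i) := by
  have h := my_logsum a b ha hb hab
  rcases eq_or_lt_of_le (Finset.sum_nonneg fun i _ => hb i) with h0 | hBpos
  · have hz : ∀ i, b i = 0 := fun i =>
      (Finset.sum_eq_zero_iff_of_nonneg (fun i _ => hb i)).mp h0.symm i (Finset.mem_univ i)
    have hz' : ∀ i, a i = 0 := fun i => hab i (hz i)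
    simp [hz']
  · rw [hsum, div_self (ne_of_gt hBpos), Real.log_one, mul_zero] at h
    exact h

/-- The `−`-transform: `ψ⁻(y) = −ln( Σ_x e^{−ψ(x)} R(x,y) / ν(y) )`. -/
noncomputable def minusT {X Y : Type*} [Fintype X] (ν : Y → ℝ) (R : X → Y → ℝ)
    (ψ : X → ℝ) (y : Y) : ℝ :=
  -Real.log ((∑ x, Real.exp (-ψ x) * R x y) / ν y)

/-- sublinear rate with a robust constant. If `R` has total mass 1
and the Sinkhorn iterates start from `φ₀ ≡ 0`, then for every coupling
`π ∈ Π(μ,ν)` absolutely continuous with respect to `R` and every `n ≥ 1`,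
`H(ρ_n|ν) ≤ H(π|R)/n`; in particular `H(ρ_n|ν) ≤ H*(μ,ν,R)/n`. -/
theorem sinkhorn_sublinear_rate {X Y : Type*} [Fintype X] [Fintype Y]
    (μ : X → ℝ) (ν : Y → ℝ) (R : X → Y → ℝ)
    (hμpos : ∀ x, 0 < μ x) (hμ : ∑ x, μ x = 1)
    (hνpos : ∀ y, 0 < ν y) (hν : ∑ y, ν y = 1)
    (hR : ∀ x y, 0 ≤ R x y)
    (hrow : ∀ x, 0 < ∑ y, R x y) (hcol : ∀ y, 0 < ∑ x, R x y)
    (hRmass : ∑ x, ∑ y, R x y = 1)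
    (φ : ℕ → Y → ℝ) (hφ0 : φ 0 = 0)
    (hiter : ∀ n, φ (n + 1) = minusT ν R (plusT μ R (φ n)))
    (ρ : ℕ → Y → ℝ) (hρ : ∀ n y, ρ n y = ∑ x, coupling μ R (φ n) x y) :
    ∀ π : X → Y → ℝ, (∀ x y, 0 ≤ π x y) →
      (∀ x, ∑ y, π x y = μ x) → (∀ y, ∑ x, π x y = ν y) →
      (∀ x y, R x y = 0 → π x y = 0) →
      ∀ n : ℕ, 1 ≤ n →
        ∑ y, ρ n y * Real.log (ρ n y / ν y) ≤
          (∑ x, ∑ y, π x y * Real.log (π x y / R x y)) / n := by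
  intro π hπnn hπrow hπcol hπac n hn
  -- basic positivity
  have hex : ∀ x, ∃ y, 0 < R x y := by
    intro x
    by_contra h; push_neg at h
    have : ∑ y, R x y ≤ 0 := Finset.sum_nonpos (fun y _ => h y)
    linarith [hrow x]
  have hey : ∀ y, ∃ x, 0 < R x y := by
    intro y
    by_contra h; push_neg at h
    have : ∑ x, R x y ≤ 0 := Finset.sum_nonpos (fun x _ => h x)
    linarith [hcol y]
  have hrpos : ∀ (k : ℕ) x, 0 < ∑ y, Real.exp (φ k y) * R x y := by
    intro k x
    obtain ⟨y, hy⟩ := hex x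
    exact Finset.sum_pos' (fun y _ => mul_nonneg (Real.exp_pos _).le (hR x y))
      ⟨y, Finset.mem_univ y, mul_pos (Real.exp_pos _) hy⟩
  have hplusexp : ∀ (k : ℕ) x,
      Real.exp (plusT μ R (φ k) x) = (∑ y, Real.exp (φ k y) * R x y) / μ x := by
    intro k x
    rw [plusT, Real.exp_log (div_pos (hrpos k x) (hμpos x))]
  have hp : ∀ (k : ℕ) x y, coupling μ R (φ k) x y
      = Real.exp (φ k y) * R x y * (μ x / ∑ y', Real.exp (φ k y') * R x y') := by
    intro k x y
    have hr := (hrpos k x).ne'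
    have hμx := (hμpos x).ne'
    rw [coupling, Real.exp_sub, hplusexp]
    field_simp
  have hpnn : ∀ (k : ℕ) x y, 0 ≤ coupling μ R (φ k) x y :=
    fun k x y => mul_nonneg (Real.exp_pos _).le (hR x y)
  have hp0 : ∀ (k : ℕ) x y, R x y = 0 → coupling μ R (φ k) x y = 0 := by
    intro k x y h; rw [coupling, h, mul_zero]
  have hp0' : ∀ (k : ℕ) x y, coupling μ R (φ k) x y = 0 → R x y = 0 := by
    intro k x y h
    rw [coupling] at h
    rcases mul_eq_zero.mp h with h | h
    · exact absurd h (Real.exp_ne_zero _)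
    · exact h
  have hppos : ∀ (k : ℕ) x y, 0 < R x y → 0 < coupling μ R (φ k) x y := by
    intro k x y h; rw [coupling]; positivity
  have hprow : ∀ (k : ℕ) x, ∑ y, coupling μ R (φ k) x y = μ x := by
    intro k x
    have hr := (hrpos k x).ne'
    calc ∑ y, coupling μ R (φ k) x y
        = (∑ y, Real.exp (φ k y) * R x y) * (μ x / ∑ y', Real.exp (φ k y') * R x y') := by
          rw [Finset.sum_mul]; exact Finset.sum_congr rfl (fun y _ => hp k x y)
      _ = μ x := by field_simp
  have hρpos : ∀ (k : ℕ) y, 0 < ρ k y := by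
    intro k y
    rw [hρ]
    obtain ⟨x, hx⟩ := hey y
    exact Finset.sum_pos' (fun x _ => hpnn k x y) ⟨x, Finset.mem_univ x, hppos k x y hx⟩
  -- the exponential form of the Sinkhorn recursion
  have hrec : ∀ (k : ℕ) y, Real.exp (φ (k + 1) y) = Real.exp (φ k y) * (ν y / ρ k y) := by
    intro k y
    have hS : (∑ x, Real.exp (-(plusT μ R (φ k) x)) * R x y)
        = ρ k y / Real.exp (φ k y) := by
      have hxt : ∀ x, Real.exp (-(plusT μ R (φ k) x)) * R x y
          = coupling μ R (φ k) x y / Real.exp (φ k y) := by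
        intro x
        rw [coupling, Real.exp_sub, Real.exp_neg]
        field_simp
      rw [Finset.sum_congr rfl (fun x _ => hxt x), ← Finset.sum_div, ← hρ]
    have hSpos : 0 < ρ k y / Real.exp (φ k y) := div_pos (hρpos k y) (Real.exp_pos _)
    rw [hiter k]
    rw [minusT, hS, Real.exp_neg, Real.exp_log (div_pos hSpos (hνpos y))]
    rw [div_div, inv_div, mul_div_assoc]
  -- the intermediate coupling q and its X-marginal m
  set q : ℕ → X → Y → ℝ := fun k x y => coupling μ R (φ k) x y * (ν y / ρ k y) with hqdef
  set m : ℕ → X → ℝ := fun k x => ∑ y, q k x y with hmdef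
  have hqnn : ∀ k x y, 0 ≤ q k x y := fun k x y =>
    mul_nonneg (hpnn k x y) (div_nonneg (hνpos y).le (hρpos k y).le)
  have hq0' : ∀ k x y, q k x y = 0 → R x y = 0 := by
    intro k x y h
    simp only [hqdef] at h
    rcases mul_eq_zero.mp h with h | h
    · exact hp0' k x y h
    · exact absurd h (ne_of_gt (div_pos (hνpos y) (hρpos k y)))
  have hqcol : ∀ k y, ∑ x, q k x y = ν y := by
    intro k y
    simp only [hqdef]
    rw [← Finset.sum_mul, ← hρ, mul_comm, div_mul_cancel₀ _ (ne_of_gt (hρpos k y))]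
  have hmx : ∀ k x, ∑ y, q k x y = m k x := by
    intro k x; simp only [hmdef]
  have hmpos : ∀ k x, 0 < m k x := by
    intro k x
    rw [← hmx]
    obtain ⟨y, hy⟩ := hex x
    refine Finset.sum_pos' (fun y _ => hqnn k x y) ⟨y, Finset.mem_univ y, ?_⟩
    simp only [hqdef]
    exact mul_pos (hppos k x y hy) (div_pos (hνpos y) (hρpos k y))
  have hstep : ∀ k x y, coupling μ R (φ (k + 1)) x y = q k x y * (μ x / m k x) := by
    intro k x y
    have hm : m k x = μ x / (∑ y', Real.exp (φ k y') * R x y')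
        * (∑ y', Real.exp (φ (k + 1) y') * R x y') := by
      rw [← hmx, Finset.mul_sum]
      refine Finset.sum_congr rfl (fun y' _ => ?_)
      simp only [hqdef]
      rw [hp k x y', hrec k y']
      ring
    have hr := (hrpos k x).ne'
    have hr' := (hrpos (k + 1) x).ne'
    have hμx := (hμpos x).ne'
    have hρy := (hρpos k y).ne'
    have hνy := (hνpos y).ne'
    rw [hp (k + 1) x y, hrec k y, hm]
    simp only [hqdef]
    rw [hp k x y]
    field_simp
  -- entropy quantities
  set E : ℕ → ℝ := fun k => ∑ y, ρ k y * Real.log (ρ k y / ν y) with hEdef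
  set Hp : ℕ → ℝ := fun k =>
    ∑ x, ∑ y, π x y * Real.log (π x y / coupling μ R (φ k) x y) with hHpdef
  set Hm : ℕ → ℝ := fun k => ∑ x, μ x * Real.log (μ x / m k x) with hHmdef
  set Hn : ℕ → ℝ := fun k => ∑ y, ν y * Real.log (ν y / ρ k y) with hHndef
  -- K1 : E (k+1) ≤ Hm k
  have hK1 : ∀ k, E (k + 1) ≤ Hm k := by
    intro k
    have step1 : E (k + 1) ≤ ∑ y, ∑ x, coupling μ R (φ (k + 1)) x y
        * Real.log (coupling μ R (φ (k + 1)) x y / q k x y) := by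
      simp only [hEdef]
      refine Finset.sum_le_sum (fun y _ => ?_)
      have h := my_logsum (fun x => coupling μ R (φ (k + 1)) x y) (fun x => q k x y)
        (fun x => hpnn (k + 1) x y) (fun x => hqnn k x y)
        (fun x hx => hp0 (k + 1) x y (hq0' k x y hx))
      rw [hqcol k y, ← hρ (k + 1) y] at h
      exact h
    have step2 : ∑ y, ∑ x, coupling μ R (φ (k + 1)) x y
        * Real.log (coupling μ R (φ (k + 1)) x y / q k x y) = Hm k := by
      rw [Finset.sum_comm]
      simp only [hHmdef]
      refine Finset.sum_congr rfl (fun x _ => ?_)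
      have hpt : ∀ y, coupling μ R (φ (k + 1)) x y
          * Real.log (coupling μ R (φ (k + 1)) x y / q k x y)
          = coupling μ R (φ (k + 1)) x y * Real.log (μ x / m k x) := by
        intro y
        rcases eq_or_lt_of_le (hpnn (k + 1) x y) with h0 | hpos
        · rw [← h0]; ring
        · have hq : q k x y ≠ 0 := by
            intro h
            exact absurd (hp0 (k + 1) x y (hq0' k x y h)) (ne_of_gt hpos)
          rw [hstep k x y, mul_comm (q k x y), mul_div_assoc, div_self hq, mul_one]
      rw [Finset.sum_congr rfl (fun y _ => hpt y), ← Finset.sum_mul, hprow (k + 1) x]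
    calc E (k + 1) ≤ _ := step1
      _ = Hm k := step2
  -- K2 : Hm k ≤ E k
  have hK2 : ∀ k, Hm k ≤ E k := by
    intro k
    have step1 : Hm k ≤ ∑ x, ∑ y, coupling μ R (φ k) x y
        * Real.log (coupling μ R (φ k) x y / q k x y) := by
      simp only [hHmdef]
      refine Finset.sum_le_sum (fun x _ => ?_)
      have h := my_logsum (fun y => coupling μ R (φ k) x y) (fun y => q k x y)
        (fun y => hpnn k x y) (fun y => hqnn k x y)
        (fun y hy => hp0 k x y (hq0' k x y hy))
      rw [hprow k x, hmx k x] at h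
      exact h
    have step2 : ∑ x, ∑ y, coupling μ R (φ k) x y
        * Real.log (coupling μ R (φ k) x y / q k x y) = E k := by
      rw [Finset.sum_comm]
      simp only [hEdef]
      refine Finset.sum_congr rfl (fun y _ => ?_)
      have hpt : ∀ x, coupling μ R (φ k) x y * Real.log (coupling μ R (φ k) x y / q k x y)
          = coupling μ R (φ k) x y * Real.log (ρ k y / ν y) := by
        intro x
        rcases eq_or_lt_of_le (hpnn k x y) with h0 | hpos
        · rw [← h0]; ring
        · have h1 : coupling μ R (φ k) x y ≠ 0 := ne_of_gt hpos
          simp only [hqdef]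
          rw [div_mul_eq_div_div, div_self h1, one_div, inv_div]
      rw [Finset.sum_congr rfl (fun x _ => hpt x), ← Finset.sum_mul, ← hρ]
    calc Hm k ≤ _ := step1
      _ = E k := step2
  -- total masses
  have hρmass : ∀ k, ∑ y, ρ k y = 1 := by
    intro k
    calc ∑ y, ρ k y = ∑ y, ∑ x, coupling μ R (φ k) x y :=
          Finset.sum_congr rfl (fun y _ => hρ k y)
      _ = ∑ x, ∑ y, coupling μ R (φ k) x y := Finset.sum_comm
      _ = ∑ x, μ x := Finset.sum_congr rfl (fun x _ => hprow k x)
      _ = 1 := hμ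
  have hmmass : ∀ k, ∑ x, m k x = 1 := by
    intro k
    calc ∑ x, m k x = ∑ x, ∑ y, q k x y :=
          Finset.sum_congr rfl (fun x _ => (hmx k x).symm)
      _ = ∑ y, ∑ x, q k x y := Finset.sum_comm
      _ = ∑ y, ν y := Finset.sum_congr rfl (fun y _ => hqcol k y)
      _ = 1 := hν
  have hK3 : ∀ k, 0 ≤ Hn k := by
    intro k
    simp only [hHndef]
    exact my_gibbs ν (ρ k) (fun y => (hνpos y).le) (fun y => (hρpos k y).le)
      (fun y h => absurd h (ne_of_gt (hρpos k y))) (by rw [hν, hρmass k])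
  have hK3' : ∀ k, 0 ≤ Hm k := by
    intro k
    simp only [hHmdef]
    exact my_gibbs μ (m k) (fun x => (hμpos x).le) (fun x => (hmpos k x).le)
      (fun x h => absurd h (ne_of_gt (hmpos k x))) (by rw [hμ, hmmass k])
  -- S1 : Hp k = Hp (k+1) + Hn k + Hm k
  have hS1 : ∀ k, Hp k = Hp (k + 1) + Hn k + Hm k := by
    intro k
    have hpt : ∀ x y, π x y * Real.log (π x y / coupling μ R (φ k) x y)
        = π x y * Real.log (π x y / coupling μ R (φ (k + 1)) x y)
          + π x y * Real.log (ν y / ρ k y) + π x y * Real.log (μ x / m k x) := by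
      intro x y
      rcases eq_or_lt_of_le (hπnn x y) with h0 | hpos
      · rw [← h0]; ring
      · have hRne : R x y ≠ 0 := fun h => absurd (hπac x y h) (ne_of_gt hpos)
        have hpk : coupling μ R (φ k) x y ≠ 0 := fun h => hRne (hp0' k x y h)
        have hpk1 : coupling μ R (φ (k + 1)) x y ≠ 0 := fun h => hRne (hp0' (k + 1) x y h)
        have hπne : π x y ≠ 0 := ne_of_gt hpos
        have hνρ : ν y / ρ k y ≠ 0 := ne_of_gt (div_pos (hνpos y) (hρpos k y))
        have hμm : μ x / m k x ≠ 0 := ne_of_gt (div_pos (hμpos x) (hmpos k x))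
        have e3 : Real.log (coupling μ R (φ (k + 1)) x y)
            = Real.log (coupling μ R (φ k) x y) + Real.log (ν y / ρ k y)
              + Real.log (μ x / m k x) := by
          rw [hstep k x y]
          simp only [hqdef]
          rw [Real.log_mul (mul_ne_zero hpk hνρ) hμm, Real.log_mul hpk hνρ]
        rw [Real.log_div hπne hpk, Real.log_div hπne hpk1, e3]
        ring
    simp only [hHpdef, hHndef, hHmdef]
    rw [Finset.sum_congr rfl (fun x _ => Finset.sum_congr rfl (fun y _ => hpt x y))]
    have hsplit : ∀ x, ∑ y, (π x y * Real.log (π x y / coupling μ R (φ (k + 1)) x y)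
          + π x y * Real.log (ν y / ρ k y) + π x y * Real.log (μ x / m k x))
        = (∑ y, π x y * Real.log (π x y / coupling μ R (φ (k + 1)) x y))
          + (∑ y, π x y * Real.log (ν y / ρ k y))
          + μ x * Real.log (μ x / m k x) := by
      intro x
      rw [Finset.sum_add_distrib, Finset.sum_add_distrib, ← Finset.sum_mul, hπrow x]
    rw [Finset.sum_congr rfl (fun x _ => hsplit x), Finset.sum_add_distrib,
      Finset.sum_add_distrib]
    congr 1
    congr 1
    rw [Finset.sum_comm]
    refine Finset.sum_congr rfl (fun y _ => ?_)
    rw [← Finset.sum_mul, hπcol y]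
  -- S2 : 0 ≤ Hp k
  have hπmass : ∑ x, ∑ y, π x y = 1 := by
    rw [Finset.sum_congr rfl (fun x _ => hπrow x), hμ]
  have hS2 : ∀ k, 0 ≤ Hp k := by
    intro k
    have h := my_gibbs (ι := X × Y) (fun z => π z.1 z.2)
      (fun z => coupling μ R (φ k) z.1 z.2)
      (fun z => hπnn z.1 z.2) (fun z => hpnn k z.1 z.2)
      (fun z hz => hπac z.1 z.2 (hp0' k z.1 z.2 hz))
      (by
        rw [Fintype.sum_prod_type, Fintype.sum_prod_type]
        simp only
        rw [hπmass, Finset.sum_congr rfl (fun x (_ : x ∈ Finset.univ) => hprow k x), hμ])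
    rw [Fintype.sum_prod_type] at h
    simp only at h
    simp only [hHpdef]
    exact h
  -- S3 : Hp 0 ≤ H(π | R)
  have hr0 : ∀ x y, coupling μ R (φ 0) x y = R x y * (μ x / ∑ y', R x y') := by
    intro x y
    rw [hp 0 x y, hφ0]
    simp [Real.exp_zero]
  have hr0pos : ∀ x, (0:ℝ) < ∑ y', R x y' := hrow
  have hS3 : Hp 0 ≤ ∑ x, ∑ y, π x y * Real.log (π x y / R x y) := by
    have hpt : ∀ x y, π x y * Real.log (π x y / R x y)
        = π x y * Real.log (π x y / coupling μ R (φ 0) x y)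
          + π x y * Real.log (μ x / ∑ y', R x y') := by
      intro x y
      rcases eq_or_lt_of_le (hπnn x y) with h0 | hpos
      · rw [← h0]; ring
      · have hRne : R x y ≠ 0 := fun h => absurd (hπac x y h) (ne_of_gt hpos)
        have hπne : π x y ≠ 0 := ne_of_gt hpos
        have hp0ne : coupling μ R (φ 0) x y ≠ 0 := fun h => hRne (hp0' 0 x y h)
        have hμr : μ x / ∑ y', R x y' ≠ 0 := ne_of_gt (div_pos (hμpos x) (hr0pos x))
        have e : Real.log (coupling μ R (φ 0) x y)
            = Real.log (R x y) + Real.log (μ x / ∑ y', R x y') := by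
          rw [hr0 x y, Real.log_mul hRne hμr]
        rw [Real.log_div hπne hRne, Real.log_div hπne hp0ne, e]
        ring
    have hgibbs : 0 ≤ ∑ x, μ x * Real.log (μ x / ∑ y', R x y') := by
      refine my_gibbs μ (fun x => ∑ y', R x y') (fun x => (hμpos x).le)
        (fun x => (hr0pos x).le) (fun x h => absurd h (ne_of_gt (hr0pos x))) ?_
      rw [hμ, hRmass]
    have heq : ∑ x, ∑ y, π x y * Real.log (π x y / R x y)
        = Hp 0 + ∑ x, μ x * Real.log (μ x / ∑ y', R x y') := by
      simp only [hHpdef]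
      rw [Finset.sum_congr rfl (fun x _ => Finset.sum_congr rfl (fun y _ => hpt x y))]
      rw [← Finset.sum_add_distrib]
      refine Finset.sum_congr rfl (fun x _ => ?_)
      rw [Finset.sum_add_distrib, ← Finset.sum_mul, hπrow x]
    rw [heq]
    linarith
  -- telescoping and conclusion
  have hmono : ∀ k, E (k + 1) ≤ E k := fun k => le_trans (hK1 k) (hK2 k)
  have hanti : Antitone E := antitone_nat_of_succ_le hmono
  have hstep' : ∀ k, E (k + 1) ≤ Hp k - Hp (k + 1) := by
    intro k
    have h1 := hS1 k
    have h2 := hK1 k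
    have h3 := hK3 k
    linarith
  have htel : ∑ k ∈ Finset.range n, E (k + 1) ≤ Hp 0 := by
    calc ∑ k ∈ Finset.range n, E (k + 1)
        ≤ ∑ k ∈ Finset.range n, (Hp k - Hp (k + 1)) :=
          Finset.sum_le_sum (fun k _ => hstep' k)
      _ = Hp 0 - Hp n := Finset.sum_range_sub' Hp n
      _ ≤ Hp 0 := by linarith [hS2 n]
  have hlower : (n : ℝ) * E n ≤ ∑ k ∈ Finset.range n, E (k + 1) := by
    calc (n : ℝ) * E n = ∑ _k ∈ Finset.range n, E n := by
          rw [Finset.sum_const, Finset.card_range, nsmul_eq_mul]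
      _ ≤ ∑ k ∈ Finset.range n, E (k + 1) :=
          Finset.sum_le_sum (fun k hk => hanti (Finset.mem_range.mp hk))
  have hnpos : (0 : ℝ) < (n : ℝ) := by
    have : 0 < n := hn
    exact_mod_cast this
  have hgoal : E n ≤ (∑ x, ∑ y, π x y * Real.log (π x y / R x y)) / n := by
    rw [le_div_iff₀ hnpos, mul_comm]
    linarith
  simpa only [hEdef] using hgoal
end

section
/- Let X and Y be finite sets, μ a probability measure on X with μ(x) > 0 for all x, ν a probability measure on Y with ν(y) > 0 for all y, and R : X × Y → [0,∞) with Σ_y R(x,y) > 0 for every x and Σ_x R(x,y) > 0 for every y. Let (φ_n)_{n≥0} be the Sinkhorn iterates φ_{n+1} = ((φ_n)⁺)⁻ starting from any φ₀ : Y → ℝ, with couplings π_n = π(φ_n) and Y-marginals ρ_n(y) = Σ_x π_n(x,y). Then for every n ≥ 1, H(ρ_n|ν) ≤ H(π*|π₀)/n for any coupling π* ∈ Π(μ,ν) of the form π* = π(φ*) for some φ* : Y → ℝ. -/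
open scoped BigOperators

lemma logSumIneq {ι : Type*} (s : Finset ι) (a b : ι → ℝ)
    (ha : ∀ i ∈ s, 0 ≤ a i) (hb : ∀ i ∈ s, 0 ≤ b i)
    (hab : ∀ i ∈ s, b i = 0 → a i = 0)
    (hA : 0 < ∑ i ∈ s, a i) (hB : 0 < ∑ i ∈ s, b i) :
    (∑ i ∈ s, a i) * Real.log ((∑ i ∈ s, a i) / (∑ i ∈ s, b i)) ≤
      ∑ i ∈ s, a i * Real.log (a i / b i) := by
  set A := ∑ i ∈ s, a i with hAdef
  set B := ∑ i ∈ s, b i with hBdef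
  have key : ∀ i ∈ s, a i * Real.log (A / B) + a i - b i * (A / B) ≤
      a i * Real.log (a i / b i) := by
    intro i hi
    rcases eq_or_lt_of_le (ha i hi) with h0 | hpos
    · rw [← h0]
      have h1 : 0 ≤ b i * (A / B) := mul_nonneg (hb i hi) (div_pos hA hB).le
      simp only [zero_mul, zero_add, zero_sub]
      linarith
    · have hbpos : 0 < b i := by
        rcases eq_or_lt_of_le (hb i hi) with h0 | h
        · exact absurd (hab i hi h0.symm) (by linarith)
        · exact h
      have ht : 0 < b i * A / (a i * B) := by positivity
      have hle := Real.log_le_sub_one_of_pos ht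
      have hlog : Real.log (b i * A / (a i * B)) =
          Real.log (b i) + Real.log A - Real.log (a i) - Real.log B := by
        rw [Real.log_div (by positivity) (by positivity),
          Real.log_mul (ne_of_gt hbpos) (ne_of_gt hA),
          Real.log_mul (ne_of_gt hpos) (ne_of_gt hB)]
        ring
      have h2 : Real.log (a i / b i) - Real.log (A / B) ≥ 1 - b i * A / (a i * B) := by
        rw [Real.log_div (ne_of_gt hpos) (ne_of_gt hbpos),
          Real.log_div (ne_of_gt hA) (ne_of_gt hB)]
        nlinarith [hlog ▸ hle]
      have h3 := mul_le_mul_of_nonneg_left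
        (by linarith : 1 - b i * A / (a i * B) ≤ Real.log (a i / b i) - Real.log (A / B))
        (le_of_lt hpos)
      have hfield : a i * (b i * A / (a i * B)) = b i * (A / B) := by
        field_simp
      nlinarith [h3, hfield]
  calc A * Real.log (A / B)
      = ∑ i ∈ s, (a i * Real.log (A / B) + a i - b i * (A / B)) := by
        rw [Finset.sum_sub_distrib, Finset.sum_add_distrib, ← Finset.sum_mul, ← Finset.sum_mul,
          ← hAdef, ← hBdef]
        have : B * (A / B) = A := by field_simp
        linarith
    _ ≤ _ := Finset.sum_le_sum key

section Aux
variable {X Y : Type*} [Fintype X] [Fintype Y] {μ : X → ℝ} {ν : Y → ℝ} {R : X → Y → ℝ}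

lemma aux_S_pos (hR : ∀ x y, 0 ≤ R x y) (hrow : ∀ x, 0 < ∑ y, R x y)
    (f : Y → ℝ) (x : X) : 0 < ∑ y, Real.exp (f y) * R x y := by
  apply Finset.sum_pos'
  · intro y _; exact mul_nonneg (Real.exp_pos _).le (hR x y)
  · obtain ⟨y, _, hy⟩ := Finset.exists_lt_of_sum_lt
      (by simpa using hrow x : ∑ y, (0:ℝ) < ∑ y, R x y)
    exact ⟨y, Finset.mem_univ y, mul_pos (Real.exp_pos _) hy⟩

lemma aux_exp_plusT (hμpos : ∀ x, 0 < μ x) (hR : ∀ x y, 0 ≤ R x y)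
    (hrow : ∀ x, 0 < ∑ y, R x y) (f : Y → ℝ) (x : X) :
    Real.exp (plusT μ R f x) = (∑ y, Real.exp (f y) * R x y) / μ x :=
  Real.exp_log (div_pos (aux_S_pos hR hrow f x) (hμpos x))

lemma aux_coup_nonneg (hR : ∀ x y, 0 ≤ R x y) (f : Y → ℝ) (x : X) (y : Y) :
    0 ≤ coupling μ R f x y := mul_nonneg (Real.exp_pos _).le (hR x y)

lemma aux_Xmarg (hμpos : ∀ x, 0 < μ x) (hR : ∀ x y, 0 ≤ R x y)
    (hrow : ∀ x, 0 < ∑ y, R x y) (f : Y → ℝ) (x : X) :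
    ∑ y, coupling μ R f x y = μ x := by
  have h1 : ∑ y, coupling μ R f x y
      = (∑ y, Real.exp (f y) * R x y) / Real.exp (plusT μ R f x) := by
    rw [Finset.sum_div]
    refine Finset.sum_congr rfl fun y _ => ?_
    rw [coupling, Real.exp_sub]; ring
  rw [h1, aux_exp_plusT hμpos hR hrow, div_div_eq_mul_div, mul_comm, mul_div_assoc,
    div_self (aux_S_pos hR hrow f x).ne', mul_one]

lemma aux_rho_pos (hR : ∀ x y, 0 ≤ R x y) (hcol : ∀ y, 0 < ∑ x, R x y)
    (f : Y → ℝ) (y : Y) : 0 < ∑ x, coupling μ R f x y := by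
  apply Finset.sum_pos'
  · intro x _; exact aux_coup_nonneg hR f x y
  · obtain ⟨x, _, hx⟩ := Finset.exists_lt_of_sum_lt
      (by simpa using hcol y : ∑ x, (0:ℝ) < ∑ x, R x y)
    exact ⟨x, Finset.mem_univ x, mul_pos (Real.exp_pos _) hx⟩

lemma aux_T_pos (hR : ∀ x y, 0 ≤ R x y) (hcol : ∀ y, 0 < ∑ x, R x y)
    (ψ : X → ℝ) (y : Y) : 0 < ∑ x, Real.exp (-ψ x) * R x y := by
  apply Finset.sum_pos'
  · intro x _; exact mul_nonneg (Real.exp_pos _).le (hR x y)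
  · obtain ⟨x, _, hx⟩ := Finset.exists_lt_of_sum_lt
      (by simpa using hcol y : ∑ x, (0:ℝ) < ∑ x, R x y)
    exact ⟨x, Finset.mem_univ x, mul_pos (Real.exp_pos _) hx⟩

lemma aux_exp_minusT (hνpos : ∀ y, 0 < ν y) (hR : ∀ x y, 0 ≤ R x y)
    (hcol : ∀ y, 0 < ∑ x, R x y) (ψ : X → ℝ) (y : Y) :
    Real.exp (minusT ν R ψ y) = ν y / (∑ x, Real.exp (-ψ x) * R x y) := by
  rw [minusT, Real.exp_neg, Real.exp_log (div_pos (aux_T_pos hR hcol ψ y) (hνpos y)),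
    inv_div]

lemma aux_rho_eq (f : Y → ℝ) (y : Y) :
    ∑ x, coupling μ R f x y
      = Real.exp (f y) * ∑ x, Real.exp (-(plusT μ R f x)) * R x y := by
  rw [Finset.mul_sum]
  refine Finset.sum_congr rfl fun x _ => ?_
  rw [coupling, Real.exp_sub, Real.exp_neg]; ring

/-- Sinkhorn step identity: `exp (φ⁺⁻ y) * ρ_f y = ν y * exp (f y)`. -/
lemma aux_step (hνpos : ∀ y, 0 < ν y) (hR : ∀ x y, 0 ≤ R x y)
    (hcol : ∀ y, 0 < ∑ x, R x y) (f : Y → ℝ) (y : Y) :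
    Real.exp (minusT ν R (plusT μ R f) y) * (∑ x, coupling μ R f x y)
      = ν y * Real.exp (f y) := by
  rw [aux_exp_minusT hνpos hR hcol, aux_rho_eq]
  have hT := (aux_T_pos hR hcol (plusT μ R f) y).ne'
  field_simp

end Aux

section Aux2
set_option linter.unusedSectionVars false
variable {X Y : Type*} [Fintype X] [Fintype Y] {μ : X → ℝ} {ν : Y → ℝ} {R : X → Y → ℝ}

lemma aux_KL (hμpos : ∀ x, 0 < μ x) (hR : ∀ x y, 0 ≤ R x y)
    (hrow : ∀ x, 0 < ∑ y, R x y) (f g : Y → ℝ) :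
    ∑ x, ∑ y, coupling μ R f x y * Real.log (coupling μ R f x y / coupling μ R g x y)
    = (∑ y, (∑ x, coupling μ R f x y) * (f y - g y))
      - ∑ x, μ x * (plusT μ R f x - plusT μ R g x) := by
  have point : ∀ x y, coupling μ R f x y * Real.log (coupling μ R f x y / coupling μ R g x y)
      = coupling μ R f x y * (f y - g y)
        - coupling μ R f x y * (plusT μ R f x - plusT μ R g x) := by
    intro x y
    rcases eq_or_lt_of_le (hR x y) with h0 | hpos
    · simp [coupling, ← h0]
    · have hratio : coupling μ R f x y / coupling μ R g x y
          = Real.exp ((f y - plusT μ R f x) - (g y - plusT μ R g x)) := by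
        rw [coupling, coupling, mul_div_mul_right _ _ hpos.ne', ← Real.exp_sub]
      rw [hratio, Real.log_exp]; ring
  simp_rw [point]
  simp only [Finset.sum_sub_distrib]
  congr 1
  · rw [Finset.sum_comm]
    exact Finset.sum_congr rfl fun y _ => (Finset.sum_mul _ _ _).symm
  · refine Finset.sum_congr rfl fun x _ => ?_
    rw [← Finset.sum_mul, aux_Xmarg hμpos hR hrow]

end Aux2


/-- for Sinkhorn iterates started from an arbitrary `φ₀`, if
`π* = π(φ*) ∈ Π(μ,ν)` for some potential `φ*` (so that `ν = ∇F(φ*)`), then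
`H(ρ_n|ν) ≤ H(π*|π₀)/n` for all `n ≥ 1`, where `π₀ = π(φ₀)`
(this is `F*(ν|ρ₀)/n`). -/
theorem sinkhorn_rate_arbitrary_start {X Y : Type*} [Fintype X] [Fintype Y]
    (μ : X → ℝ) (ν : Y → ℝ) (R : X → Y → ℝ)
    (hμpos : ∀ x, 0 < μ x) (hμ : ∑ x, μ x = 1)
    (hνpos : ∀ y, 0 < ν y) (hν : ∑ y, ν y = 1)
    (hR : ∀ x y, 0 ≤ R x y)
    (hrow : ∀ x, 0 < ∑ y, R x y) (hcol : ∀ y, 0 < ∑ x, R x y)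
    (φ : ℕ → Y → ℝ)
    (hiter : ∀ n, φ (n + 1) = minusT ν R (plusT μ R (φ n)))
    (ρ : ℕ → Y → ℝ) (hρ : ∀ n y, ρ n y = ∑ x, coupling μ R (φ n) x y)
    (φs : Y → ℝ)
    (hφs : ∀ y, ∑ x, coupling μ R φs x y = ν y) :
    ∀ n : ℕ, 1 ≤ n →
      ∑ y, ρ n y * Real.log (ρ n y / ν y) ≤
        (∑ x, ∑ y, coupling μ R φs x y *
          Real.log (coupling μ R φs x y / coupling μ R (φ 0) x y)) / n := by
  classical
  set r : ℕ → Y → ℝ := fun m y => ∑ x, coupling μ R (φ m) x y with hrdef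
  set Hh : ℕ → ℝ := fun m => ∑ y, r m y * Real.log (r m y / ν y) with hHdef
  set D : ℕ → ℝ := fun m => ∑ x, ∑ y, coupling μ R φs x y *
      Real.log (coupling μ R φs x y / coupling μ R (φ m) x y) with hDdef
  have hrpos : ∀ m y, 0 < r m y := fun m y => aux_rho_pos hR hcol (φ m) y
  have hrsum : ∀ m, ∑ y, r m y = 1 := by
    intro m
    simp only [hrdef]
    rw [Finset.sum_comm]
    simp only [aux_Xmarg hμpos hR hrow (φ m)]
    exact hμ
  -- exponential form of the Sinkhorn step
  have hexpstep : ∀ k y, Real.exp (φ (k+1) y) = Real.exp (φ k y) * (ν y / r k y) := by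
    intro k y
    have h := aux_step (μ := μ) hνpos hR hcol (φ k) y
    rw [← hiter k] at h
    have hrk : (∑ x, coupling μ R (φ k) x y) = r k y := rfl
    rw [hrk] at h
    rw [mul_div_assoc' , eq_div_iff (hrpos k y).ne']
    linear_combination h
  have hlogstep : ∀ k y, φ (k+1) y = φ k y + Real.log (ν y / r k y) := by
    intro k y
    have := hexpstep k y
    rw [← Real.exp_log (div_pos (hνpos y) (hrpos k y)), ← Real.exp_add] at this
    exact Real.exp_injective this
  -- formula for D
  have hDform : ∀ k, D k = (∑ y, ν y * (φs y - φ k y))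
      - ∑ x, μ x * (plusT μ R φs x - plusT μ R (φ k) x) := by
    intro k
    simp only [hDdef]
    rw [aux_KL hμpos hR hrow]
    simp only [hφs]
  have hdiff : ∀ k, D k - D (k+1) = (∑ y, ν y * (φ (k+1) y - φ k y))
      - ∑ x, μ x * (plusT μ R (φ (k+1)) x - plusT μ R (φ k) x) := by
    intro k
    have l1 : ∑ y, ν y * (φ (k+1) y - φ k y)
        = (∑ y, ν y * (φs y - φ k y)) - ∑ y, ν y * (φs y - φ (k+1) y) := by
      rw [← Finset.sum_sub_distrib]
      exact Finset.sum_congr rfl fun y _ => by ring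
    have l2 : ∑ x, μ x * (plusT μ R (φ (k+1)) x - plusT μ R (φ k) x)
        = (∑ x, μ x * (plusT μ R φs x - plusT μ R (φ k) x))
          - ∑ x, μ x * (plusT μ R φs x - plusT μ R (φ (k+1)) x) := by
      rw [← Finset.sum_sub_distrib]
      exact Finset.sum_congr rfl fun x _ => by ring
    rw [hDform k, hDform (k+1), l1, l2]
    ring
  -- inequality A : ∑ ν (φ(k+1) - φ k) ≥ 0
  have ineqA : ∀ k, 0 ≤ ∑ y, ν y * (φ (k+1) y - φ k y) := by
    intro k
    have : ∀ y, ν y * (φ (k+1) y - φ k y) = ν y * Real.log (ν y / r k y) := by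
      intro y; rw [hlogstep k y]; ring
    simp_rw [this]
    have := logSumIneq Finset.univ ν (r k) (fun y _ => (hνpos y).le)
      (fun y _ => (hrpos k y).le) (fun y _ h => absurd h (hrpos k y).ne')
      (by rw [hν]; norm_num) (by rw [hrsum k]; norm_num)
    rw [hν, hrsum k] at this
    simpa using this
  -- inequality B : Hh (k+1) ≤ - ∑ μ (p(k+1) - p k)
  have ineqB : ∀ k, Hh (k+1) ≤
      - ∑ x, μ x * (plusT μ R (φ (k+1)) x - plusT μ R (φ k) x) := by
    intro k
    have main : ∀ y, r (k+1) y * Real.log (r (k+1) y / ν y)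
        ≤ ∑ x, coupling μ R (φ (k+1)) x y *
            (plusT μ R (φ k) x - plusT μ R (φ (k+1)) x) := by
      intro y
      have hbsum : ∑ x, Real.exp (φ (k+1) y - plusT μ R (φ k) x) * R x y = ν y := by
        have h1 : ∑ x, Real.exp (φ (k+1) y - plusT μ R (φ k) x) * R x y
            = Real.exp (φ (k+1) y) * ∑ x, Real.exp (-(plusT μ R (φ k) x)) * R x y := by
          rw [Finset.mul_sum]
          refine Finset.sum_congr rfl fun x _ => ?_
          rw [Real.exp_sub, Real.exp_neg]; ring
        rw [h1, hiter k, aux_exp_minusT hνpos hR hcol,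
          div_mul_cancel₀ _ (aux_T_pos hR hcol _ y).ne']
      have point : ∀ x, coupling μ R (φ (k+1)) x y *
          Real.log (coupling μ R (φ (k+1)) x y /
            (Real.exp (φ (k+1) y - plusT μ R (φ k) x) * R x y))
          = coupling μ R (φ (k+1)) x y *
            (plusT μ R (φ k) x - plusT μ R (φ (k+1)) x) := by
        intro x
        rcases eq_or_lt_of_le (hR x y) with h0 | hpos
        · simp [coupling, ← h0]
        · have hr2 : coupling μ R (φ (k+1)) x y /
              (Real.exp (φ (k+1) y - plusT μ R (φ k) x) * R x y)
              = Real.exp ((φ (k+1) y - plusT μ R (φ (k+1)) x)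
                  - (φ (k+1) y - plusT μ R (φ k) x)) := by
            rw [coupling, mul_div_mul_right _ _ hpos.ne', ← Real.exp_sub]
          rw [hr2, Real.log_exp]
          ring
      have key := logSumIneq Finset.univ (fun x => coupling μ R (φ (k+1)) x y)
        (fun x => Real.exp (φ (k+1) y - plusT μ R (φ k) x) * R x y)
        (fun x _ => aux_coup_nonneg hR _ _ _)
        (fun x _ => mul_nonneg (Real.exp_pos _).le (hR x y))
        (fun x _ h => by
          rcases mul_eq_zero.mp h with h | h
          · exact absurd h (Real.exp_pos _).ne'
          · simp [coupling, h])
        (hrpos (k+1) y) (by rw [hbsum]; exact hνpos y)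
      rw [hbsum] at key
      calc r (k+1) y * Real.log (r (k+1) y / ν y)
          ≤ ∑ x, coupling μ R (φ (k+1)) x y *
              Real.log (coupling μ R (φ (k+1)) x y /
                (Real.exp (φ (k+1) y - plusT μ R (φ k) x) * R x y)) := key
        _ = _ := Finset.sum_congr rfl fun x _ => point x
    have swap : ∑ y, ∑ x, coupling μ R (φ (k+1)) x y *
        (plusT μ R (φ k) x - plusT μ R (φ (k+1)) x)
        = ∑ x, μ x * (plusT μ R (φ k) x - plusT μ R (φ (k+1)) x) := by
      rw [Finset.sum_comm]
      refine Finset.sum_congr rfl fun x _ => ?_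
      rw [← Finset.sum_mul, aux_Xmarg hμpos hR hrow]
    have eneg : ∑ x, μ x * (plusT μ R (φ k) x - plusT μ R (φ (k+1)) x)
        = - ∑ x, μ x * (plusT μ R (φ (k+1)) x - plusT μ R (φ k) x) := by
      rw [← Finset.sum_neg_distrib]
      exact Finset.sum_congr rfl fun x _ => by ring
    calc Hh (k+1) = ∑ y, r (k+1) y * Real.log (r (k+1) y / ν y) := rfl
      _ ≤ ∑ y, ∑ x, coupling μ R (φ (k+1)) x y *
            (plusT μ R (φ k) x - plusT μ R (φ (k+1)) x) :=
          Finset.sum_le_sum fun y _ => main y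
      _ = ∑ x, μ x * (plusT μ R (φ k) x - plusT μ R (φ (k+1)) x) := swap
      _ = _ := eneg
  -- inequality C : - ∑ μ (p(k+1) - p k) ≤ Hh k
  have ineqC : ∀ k, - ∑ x, μ x * (plusT μ R (φ (k+1)) x - plusT μ R (φ k) x) ≤ Hh k := by
    intro k
    have main : ∀ x, μ x * (plusT μ R (φ k) x - plusT μ R (φ (k+1)) x)
        ≤ ∑ y, coupling μ R (φ k) x y * Real.log (r k y / ν y) := by
      intro x
      have hbsum : ∑ y, coupling μ R (φ k) x y * (ν y / r k y)
          = μ x * Real.exp (plusT μ R (φ (k+1)) x - plusT μ R (φ k) x) := by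
        have e1 : ∀ y, coupling μ R (φ k) x y * (ν y / r k y)
            = Real.exp (-(plusT μ R (φ k) x)) * (Real.exp (φ (k+1) y) * R x y) := by
          intro y
          rw [coupling, Real.exp_sub, hexpstep k y, Real.exp_neg]
          field_simp
        simp_rw [e1]
        rw [← Finset.mul_sum]
        have e2 : ∑ y, Real.exp (φ (k+1) y) * R x y
            = Real.exp (plusT μ R (φ (k+1)) x) * μ x := by
          have := aux_exp_plusT (μ := μ) hμpos hR hrow (φ (k+1)) x
          rw [this, div_mul_cancel₀ _ (hμpos x).ne']
        rw [e2, Real.exp_neg, Real.exp_sub]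
        ring
      have key := logSumIneq Finset.univ (fun y => coupling μ R (φ k) x y)
        (fun y => coupling μ R (φ k) x y * (ν y / r k y))
        (fun y _ => aux_coup_nonneg hR _ _ _)
        (fun y _ => mul_nonneg (aux_coup_nonneg hR _ _ _)
          (div_pos (hνpos y) (hrpos k y)).le)
        (fun y _ h => by
          rcases mul_eq_zero.mp h with h | h
          · exact h
          · exact absurd h (div_pos (hνpos y) (hrpos k y)).ne')
        (by rw [aux_Xmarg hμpos hR hrow]; exact hμpos x)
        (by rw [hbsum]; exact mul_pos (hμpos x) (Real.exp_pos _))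
      rw [aux_Xmarg hμpos hR hrow, hbsum] at key
      have e3 : μ x / (μ x * Real.exp (plusT μ R (φ (k+1)) x - plusT μ R (φ k) x))
          = Real.exp (plusT μ R (φ k) x - plusT μ R (φ (k+1)) x) := by
        have h1 : μ x * Real.exp (plusT μ R (φ (k+1)) x - plusT μ R (φ k) x) ≠ 0 :=
          (mul_pos (hμpos x) (Real.exp_pos _)).ne'
        rw [div_eq_iff h1]
        have h2 : Real.exp (plusT μ R (φ k) x - plusT μ R (φ (k+1)) x) *
            Real.exp (plusT μ R (φ (k+1)) x - plusT μ R (φ k) x) = 1 := by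
          rw [← Real.exp_add]; ring_nf; exact Real.exp_zero
        linear_combination (-(μ x)) * h2
      rw [e3, Real.log_exp] at key
      have point : ∀ y, coupling μ R (φ k) x y *
          Real.log (coupling μ R (φ k) x y /
            (coupling μ R (φ k) x y * (ν y / r k y)))
          = coupling μ R (φ k) x y * Real.log (r k y / ν y) := by
        intro y
        rcases eq_or_lt_of_le (aux_coup_nonneg hR (φ k) x y) with h0 | hpos
        · rw [← h0, zero_mul, zero_mul]
        · congr 1
          rw [div_mul_cancel_left₀ hpos.ne', inv_div]
      rw [Finset.sum_congr rfl fun y _ => point y] at key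
      exact key
    have swap : ∑ x, ∑ y, coupling μ R (φ k) x y * Real.log (r k y / ν y)
        = Hh k := by
      rw [Finset.sum_comm]
      refine Finset.sum_congr rfl fun y _ => ?_
      rw [← Finset.sum_mul]
    have eneg : - ∑ x, μ x * (plusT μ R (φ (k+1)) x - plusT μ R (φ k) x)
        = ∑ x, μ x * (plusT μ R (φ k) x - plusT μ R (φ (k+1)) x) := by
      rw [← Finset.sum_neg_distrib]
      exact Finset.sum_congr rfl fun x _ => by ring
    calc - ∑ x, μ x * (plusT μ R (φ (k+1)) x - plusT μ R (φ k) x)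
        = ∑ x, μ x * (plusT μ R (φ k) x - plusT μ R (φ (k+1)) x) := eneg
      _ ≤ ∑ x, ∑ y, coupling μ R (φ k) x y * Real.log (r k y / ν y) :=
          Finset.sum_le_sum fun x _ => main x
      _ = Hh k := swap
  -- D is nonnegative
  have Dnonneg : ∀ m, 0 ≤ D m := by
    intro m
    have e1 : ∑ p : X × Y, coupling μ R φs p.1 p.2 = 1 := by
      rw [Fintype.sum_prod_type]
      simp only [aux_Xmarg hμpos hR hrow]
      exact hμ
    have e2 : ∑ p : X × Y, coupling μ R (φ m) p.1 p.2 = 1 := by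
      rw [Fintype.sum_prod_type]
      simp only [aux_Xmarg hμpos hR hrow]
      exact hμ
    have key := logSumIneq Finset.univ (fun p : X × Y => coupling μ R φs p.1 p.2)
      (fun p : X × Y => coupling μ R (φ m) p.1 p.2)
      (fun p _ => aux_coup_nonneg hR _ _ _)
      (fun p _ => aux_coup_nonneg hR _ _ _)
      (fun p _ h => by
        rcases mul_eq_zero.mp h with h | h
        · exact absurd h (Real.exp_pos _).ne'
        · simp [coupling, h])
      (by rw [e1]; norm_num) (by rw [e2]; norm_num)
    rw [e1, e2] at key
    simp only [one_mul, div_one, Real.log_one] at key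
    have hDm : D m = ∑ p : X × Y, coupling μ R φs p.1 p.2 *
        Real.log (coupling μ R φs p.1 p.2 / coupling μ R (φ m) p.1 p.2) := by
      simp only [hDdef]
      rw [Fintype.sum_prod_type]
    rw [hDm]
    exact key
  -- assembly
  have hstep' : ∀ k, Hh (k+1) ≤ D k - D (k+1) := by
    intro k
    rw [hdiff k]
    linarith [ineqA k, ineqB k]
  have hmono : Antitone Hh := antitone_nat_of_succ_le fun k => (ineqB k).trans (ineqC k)
  intro n hn
  have h1 : ∑ k ∈ Finset.range n, Hh (k+1) ≤ D 0 := by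
    calc ∑ k ∈ Finset.range n, Hh (k+1)
        ≤ ∑ k ∈ Finset.range n, (D k - D (k+1)) := Finset.sum_le_sum fun k _ => hstep' k
      _ = D 0 - D n := Finset.sum_range_sub' D n
      _ ≤ D 0 := by linarith [Dnonneg n]
  have h2 : (n : ℝ) * Hh n ≤ ∑ k ∈ Finset.range n, Hh (k+1) := by
    calc (n : ℝ) * Hh n = ∑ _k ∈ Finset.range n, Hh n := by
          rw [Finset.sum_const, Finset.card_range, nsmul_eq_mul]
      _ ≤ _ := Finset.sum_le_sum fun k hk =>
          hmono (Nat.succ_le_of_lt (Finset.mem_range.mp hk))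
  have hfin : Hh n ≤ D 0 / n := by
    rw [le_div_iff₀ (by exact_mod_cast Nat.lt_of_lt_of_le Nat.zero_lt_one hn : (0:ℝ) < n)]
    calc Hh n * n = (n : ℝ) * Hh n := by ring
      _ ≤ D 0 := h2.trans h1
  simp only [hρ]
  exact hfin
end
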